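/- arXiv:1203.2951 — 2 statements merged into one kernel-verified Lean document; each statement's English description precedes it below -/
import Mathlib

section
/- Let X be a metric space, μ a finite measure on X, and j an assignment to points S_1,…,S_n. Suppose there exist measurable sets A ⊆ j⁻¹{l}, B ⊆ j⁻¹{m} with μ(A) = μ(B) > 0 and real numbers a > b such that d(U,S_l) − d(U,S_m) > a for all U ∈ A and d(U,S_l) − d(U,S_m) < b for all U ∈ B. Then the reassigned function j' (sending A to m, B to l, agreeing with j elsewhere) satisfies D(j') < D(j) and has the same measures of preimages: μ(j'⁻¹{k}) = μ(j⁻¹{k}) for all k. -/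
open MeasureTheory
open scoped Classical

/-!
With `g U = d(S l, U) - d(S m, U)`, the gain of serving `U` from `m` instead of `l`, the cost of
the reassigned map is pointwise the cost of `j` minus `g` on `A` plus `g` on `B`. Since `g > a` on
`A`, `g < b` on `B` and `μ A = μ B`, the total cost drops by at least `(a - b) μ(A) > 0`. The
preimages of the two maps agree off `A ∪ B`, and on `A` and `B` the two maps take the values
`m`, `l` in swapped roles, so `μ A = μ B` again makes the preimage measures equal.
-/

namespace Reassign

variable {X ι : Type*}

noncomputable def reassign (j : X → ι) (A B : Set X) (m l : ι) : X → ι :=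
  fun U => if U ∈ A then m else if U ∈ B then l else j U

section Measure

variable [MeasurableSpace X] {μ : Measure X}

theorem measure_eq_inter_add_inter_add_diff {A B : Set X} (hA : MeasurableSet A)
    (hB : MeasurableSet B) (hAB : Disjoint A B) (s : Set X) :
    μ s = μ (s ∩ A) + μ (s ∩ B) + μ (s \ (A ∪ B)) := by
  have hsA : s \ A ∩ B = s ∩ B :=
    Set.ext fun U => ⟨fun ⟨⟨hs, _⟩, hUB⟩ => ⟨hs, hUB⟩,
      fun ⟨hs, hUB⟩ => ⟨⟨hs, fun hUA => Set.disjoint_left.1 hAB hUA hUB⟩, hUB⟩⟩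
  rw [add_assoc, ← Set.sdiff_sdiff, ← hsA, measure_inter_add_sdiff _ hB,
    measure_inter_add_sdiff _ hA]

theorem measure_preimage_inter_of_eqOn_const {f : X → ι} {A : Set X} {c : ι}
    (hf : Set.EqOn f (Function.const X c) A) (s : Set ι) :
    μ (f ⁻¹' s ∩ A) = if c ∈ s then μ A else 0 := by
  by_cases hc : c ∈ s
  · rw [if_pos hc, Set.inter_eq_right.2 fun U hU => by rw [Set.mem_preimage, hf hU]; exact hc]
  · have hempty : f ⁻¹' s ∩ A = ∅ := Set.eq_empty_of_forall_notMem fun U ⟨hUs, hUA⟩ =>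
      hc (by rwa [Set.mem_preimage, hf hUA] at hUs)
    rw [if_neg hc, hempty, measure_empty]

theorem measure_preimage_eq_of_swap {f g : X → ι} {A B : Set X} {c c' : ι}
    (hA : MeasurableSet A) (hB : MeasurableSet B) (hdisj : Disjoint A B) (hAB : μ A = μ B)
    (hfg : Set.EqOn f g (A ∪ B)ᶜ)
    (hfA : Set.EqOn f (Function.const X c) A) (hgB : Set.EqOn g (Function.const X c) B)
    (hfB : Set.EqOn f (Function.const X c') B) (hgA : Set.EqOn g (Function.const X c') A)
    (s : Set ι) : μ (f ⁻¹' s) = μ (g ⁻¹' s) := by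
  have hout : f ⁻¹' s \ (A ∪ B) = g ⁻¹' s \ (A ∪ B) := by
    ext U
    simp only [Set.mem_sdiff, Set.mem_preimage]
    exact ⟨fun ⟨h, hU⟩ => ⟨hfg hU ▸ h, hU⟩, fun ⟨h, hU⟩ => ⟨(hfg hU).symm ▸ h, hU⟩⟩
  rw [measure_eq_inter_add_inter_add_diff hA hB hdisj (f ⁻¹' s),
    measure_eq_inter_add_inter_add_diff hA hB hdisj (g ⁻¹' s), hout,
    measure_preimage_inter_of_eqOn_const hfA, measure_preimage_inter_of_eqOn_const hfB,
    measure_preimage_inter_of_eqOn_const hgA, measure_preimage_inter_of_eqOn_const hgB, hAB]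
  split_ifs <;> simp only [add_comm]

theorem measure_preimage_reassign {j : X → ι} {A B : Set X} {m l : ι}
    (hA : MeasurableSet A) (hB : MeasurableSet B) (hdisj : Disjoint A B)
    (hAj : A ⊆ j ⁻¹' {l}) (hBj : B ⊆ j ⁻¹' {m}) (hAB : μ A = μ B) (s : Set ι) :
    μ (reassign j A B m l ⁻¹' s) = μ (j ⁻¹' s) := by
  refine measure_preimage_eq_of_swap (c := m) (c' := l) hA hB hdisj hAB ?_ ?_ ?_ ?_ ?_ s
  · intro U hU
    simp only [Set.mem_compl_iff, Set.mem_union, not_or] at hU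
    simp [reassign, hU.1, hU.2]
  · intro U hU
    simp [reassign, hU]
  · exact hBj
  · intro U hU
    simp [reassign, hU, Set.disjoint_right.1 hdisj hU]
  · exact hAj

end Measure

section Cost

theorem cost_reassign_eq (c : ι → X → ℝ) {j : X → ι} {A B : Set X} {m l : ι}
    (hAj : A ⊆ j ⁻¹' {l}) (hBj : B ⊆ j ⁻¹' {m}) (U : X) :
    c (reassign j A B m l U) U =
      c (j U) U - A.indicator (c l - c m) U + B.indicator (c l - c m) U := by
  by_cases hUA : U ∈ A
  · have hjU : j U = l := hAj hUA
    by_cases hUB : U ∈ B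
    · have hml : m = l := (hBj hUB).symm.trans hjU
      simp [reassign, hUA, hUB, hjU, hml]
    · simp [reassign, hUA, hUB, hjU]
  · by_cases hUB : U ∈ B
    · have hjU : j U = m := hBj hUB
      simp [reassign, hUA, hUB, hjU]
    · simp [reassign, hUA, hUB]

variable [MeasurableSpace X] {μ : Measure X}

theorem integral_cost_reassign (c : ι → X → ℝ) {j : X → ι} {A B : Set X} {m l : ι}
    (hAj : A ⊆ j ⁻¹' {l}) (hBj : B ⊆ j ⁻¹' {m}) (hA : MeasurableSet A) (hB : MeasurableSet B)
    (hc : Integrable (fun U => c (j U) U) μ)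
    (hgA : IntegrableOn (c l - c m) A μ) (hgB : IntegrableOn (c l - c m) B μ) :
    ∫ U, c (reassign j A B m l U) U ∂μ =
      ∫ U, c (j U) U ∂μ - ∫ U in A, (c l - c m) U ∂μ + ∫ U in B, (c l - c m) U ∂μ := by
  simp_rw [cost_reassign_eq c hAj hBj]
  have hcA : Integrable (fun U => c (j U) U - A.indicator (c l - c m) U) μ :=
    hc.sub (hgA.integrable_indicator hA)
  rw [integral_add hcA (hgB.integrable_indicator hB),
    integral_sub hc (hgA.integrable_indicator hA), integral_indicator hA, integral_indicator hB]

theorem integral_cost_reassign_lt (c : ι → X → ℝ) {j : X → ι} {A B : Set X} {m l : ι}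
    (hAj : A ⊆ j ⁻¹' {l}) (hBj : B ⊆ j ⁻¹' {m}) (hA : MeasurableSet A) (hB : MeasurableSet B)
    (hc : Integrable (fun U => c (j U) U) μ)
    (hgA : IntegrableOn (c l - c m) A μ) (hgB : IntegrableOn (c l - c m) B μ)
    (hAfin : μ A ≠ ⊤) (hAB : μ A = μ B) (hApos : 0 < μ A) {a b : ℝ} (hab : b < a)
    (ha : ∀ U ∈ A, a ≤ c l U - c m U) (hb : ∀ U ∈ B, c l U - c m U ≤ b) :
    ∫ U, c (reassign j A B m l U) U ∂μ < ∫ U, c (j U) U ∂μ := by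
  have hBfin : μ B ≠ ⊤ := hAB ▸ hAfin
  have hgainA : a * μ.real A ≤ ∫ U in A, (c l - c m) U ∂μ :=
    setIntegral_ge_of_const_le_real hA hAfin ha hgA
  have hgainB : ∫ U in B, (c l - c m) U ∂μ ≤ μ.real B * b := by
    calc ∫ U in B, (c l - c m) U ∂μ ≤ ∫ _ in B, b ∂μ :=
          setIntegral_mono_on hgB (integrableOn_const hBfin) hB hb
      _ = μ.real B * b := by rw [setIntegral_const, smul_eq_mul]
  have hApos' : 0 < μ.real A := ENNReal.toReal_pos hApos.ne' hAfin
  have hAB' : μ.real A = μ.real B := congrArg ENNReal.toReal hAB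
  rw [← hAB'] at hgainB
  rw [integral_cost_reassign c hAj hBj hA hB hc hgA hgB]
  linarith [mul_lt_mul_of_pos_left hab hApos']

end Cost

theorem integrable_dist_sub_dist [PseudoMetricSpace X] [MeasurableSpace X]
    [OpensMeasurableSpace X] (μ : Measure X) [IsFiniteMeasure μ] (x y : X) :
    Integrable (fun U => dist x U - dist y U) μ :=
  Integrable.of_bound (by fun_prop) (dist x y)
    (Filter.Eventually.of_forall fun U => abs_dist_sub_le x y U)

end Reassign

open Reassign in
theorem stmt1_general {X : Type*} [MetricSpace X] [MeasurableSpace X] [BorelSpace X]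
    (μ : Measure X) [IsFiniteMeasure μ] {n : ℕ} (S : Fin n → X)
    (j : X → Fin n)
    (hint : Integrable (fun U => dist (S (j U)) U) μ)
    (m l : Fin n)
    (A B : Set X) (hA : MeasurableSet A) (hB : MeasurableSet B)
    (hAj : A ⊆ j ⁻¹' {l}) (hBj : B ⊆ j ⁻¹' {m})
    (hAB : μ A = μ B) (hApos : 0 < μ A)
    (a b : ℝ) (hab : a > b)
    (ha : ∀ U ∈ A, dist U (S l) - dist U (S m) > a)
    (hb : ∀ U ∈ B, dist U (S l) - dist U (S m) < b) :
    (∫ U, dist (S (if U ∈ A then m else if U ∈ B then l else j U)) U ∂μ <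
      ∫ U, dist (S (j U)) U ∂μ) ∧
    ∀ k : Fin n,
      μ ((fun U => if U ∈ A then m else if U ∈ B then l else j U) ⁻¹' {k}) =
        μ (j ⁻¹' {k}) := by
  have hdisj : Disjoint A B :=
    Set.disjoint_left.2 fun U hUA hUB => lt_asymm ((hb U hUB).trans hab) (ha U hUA)
  let c : Fin n → X → ℝ := fun i U => dist (S i) U
  have hg : Integrable (c l - c m) μ := integrable_dist_sub_dist μ (S l) (S m)
  refine ⟨integral_cost_reassign_lt c hAj hBj hA hB hint hg.integrableOn hg.integrableOn
    (measure_ne_top μ A) hAB hApos hab (fun U hU => ?_) (fun U hU => ?_),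
    fun k => measure_preimage_reassign hA hB hdisj hAj hBj hAB {k}⟩
  · simpa [c, dist_comm] using (ha U hU).le
  · simpa [c, dist_comm] using (hb U hU).le

/-- Reassigning a set `A ⊆ j⁻¹ {l}` of users to `m` and a set `B ⊆ j⁻¹ {m}` of the same
measure to `l` strictly decreases the total distance when the gains exceed the losses,
and it preserves the measures of all preimages. -/
theorem stmt1 {X : Type*} [MetricSpace X] [MeasurableSpace X] [BorelSpace X]
    (μ : Measure X) [IsFiniteMeasure μ] {n : ℕ} (S : Fin n → X)
    (j : X → Fin n) (hj : Measurable j)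
    (hint : Integrable (fun U => dist (S (j U)) U) μ)
    (m l : Fin n) (hml : m ≠ l)
    (A B : Set X) (hA : MeasurableSet A) (hB : MeasurableSet B)
    (hAj : A ⊆ j ⁻¹' {l}) (hBj : B ⊆ j ⁻¹' {m})
    (hAB : μ A = μ B) (hApos : 0 < μ A)
    (a b : ℝ) (hab : a > b)
    (ha : ∀ U ∈ A, dist U (S l) - dist U (S m) > a)
    (hb : ∀ U ∈ B, dist U (S l) - dist U (S m) < b) :
    (∫ U, dist (S (if U ∈ A then m else if U ∈ B then l else j U)) U ∂μ <
      ∫ U, dist (S (j U)) U ∂μ) ∧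
    ∀ k : Fin n,
      μ ((fun U => if U ∈ A then m else if U ∈ B then l else j U) ⁻¹' {k}) =
        μ (j ⁻¹' {k}) :=
  stmt1_general μ S j hint m l A B hA hB hAj hBj hAB hApos a b hab ha hb
end

section
/- Let X be a metric space with finite measure μ, S_1,…,S_n ∈ X, d_1,…,d_n ∈ ℝ, and let j₀ be a measurable assignment such that j₀(U) = m implies U ∈ σ_m(d) (the hyperbolic Voronoi cell). Suppose the capacities C_m satisfy μ(j₀⁻¹{m}) ≤ C_m for all m, and for every m with μ(j₀⁻¹{m}) < C_m we have d_m = min_l d_l. Then j₀ minimizes D(j) = ∫ d(S_{j(U)},U) dμ(U) over all measurable j with μ(j⁻¹{m}) ≤ C_m for all m. -/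
open MeasureTheory

private lemma key_sum {n : ℕ} [Nonempty (Fin n)] (d a b c : Fin n → ℝ)
    (hab : ∑ m, a m = ∑ m, b m) (hbC : ∀ m, b m ≤ c m)
    (hsl : ∀ m, a m < c m → ∀ l, d m ≤ d l) :
    ∑ m, d m * b m ≤ ∑ m, d m * a m := by
  obtain ⟨m₀, _, hm₀⟩ := Finset.exists_min_image Finset.univ d Finset.univ_nonempty
  set e : ℝ := d m₀ with he
  have h0 : ∀ m, 0 ≤ (d m - e) * (a m - b m) := by
    intro m
    rcases le_or_gt (b m) (a m) with h | h
    · exact mul_nonneg (sub_nonneg.2 (hm₀ m (Finset.mem_univ m)))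
        (sub_nonneg.2 h)
    · have hde : d m = e :=
        le_antisymm (hsl m (lt_of_lt_of_le h (hbC m)) m₀) (hm₀ m (Finset.mem_univ m))
      simp [hde]
  have hsum : 0 ≤ ∑ m, (d m - e) * (a m - b m) :=
    Finset.sum_nonneg fun m _ => h0 m
  have hexp : ∑ m, (d m - e) * (a m - b m)
      = (∑ m, d m * a m) - (∑ m, d m * b m) - e * (∑ m, a m) + e * (∑ m, b m) := by
    rw [Finset.mul_sum, Finset.mul_sum, ← Finset.sum_sub_distrib,
      ← Finset.sum_sub_distrib, ← Finset.sum_add_distrib]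
    exact Finset.sum_congr rfl fun m _ => by ring
  rw [hexp, hab] at hsum
  linarith

private lemma integral_comp_eq {X : Type*} [MeasurableSpace X]
    (μ : Measure X) [IsFiniteMeasure μ] {n : ℕ} (d : Fin n → ℝ)
    (k : X → Fin n) (hk : Measurable k) :
    ∫ U, d (k U) ∂μ = ∑ m, d m * (μ (k ⁻¹' {m})).toReal := by
  have hrepr : (fun U => d (k U))
      = fun U => ∑ m, Set.indicator (k ⁻¹' {m}) (fun _ => d m) U := by
    funext U
    rw [Finset.sum_eq_single (k U)]
    · simp [Set.indicator_of_mem, Set.mem_preimage]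
    · intro m _ hm
      exact Set.indicator_of_notMem (by simp [Ne.symm hm]) _
    · simp
  rw [hrepr, integral_finset_sum]
  · refine Finset.sum_congr rfl fun m _ => ?_
    rw [integral_indicator_const (d m) (hk (measurableSet_singleton m))]
    rw [smul_eq_mul, mul_comm, measureReal_def]
  · exact fun m _ => (integrable_const (d m)).indicator (hk (measurableSet_singleton m))

private lemma sum_measure_preimage {X : Type*} [MeasurableSpace X]
    (μ : Measure X) {n : ℕ} (k : X → Fin n) (hk : Measurable k) :
    ∑ m, μ (k ⁻¹' {m}) = μ Set.univ := by
  rw [← tsum_fintype (L := SummationFilter.unconditional _), ← measure_iUnion]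
  · congr 1
    ext x; simp
  · intro m l hml
    apply Set.disjoint_left.2
    intro x hx hx'
    simp only [Set.mem_preimage, Set.mem_singleton_iff] at hx hx'
    exact hml (hx ▸ hx')
  · exact fun m => hk (measurableSet_singleton m)

/-- Sufficiency of the hyperbolic Voronoi structure plus complementary slackness:
if `j₀` assigns each point to (the cell of) a center whose hyperbolic Voronoi cell
contains it, the capacities are respected, and `d m` is minimal whenever the constraint
at `m` is inactive, then `j₀` minimizes the total distance over all measurable
assignments respecting the capacities. -/
theorem stmt12 {X : Type*} [MetricSpace X] [MeasurableSpace X] [BorelSpace X]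
    (μ : Measure X) [IsFiniteMeasure μ] {n : ℕ} (S : Fin n → X) (d : Fin n → ℝ)
    (C : Fin n → ℝ)
    (j₀ : X → Fin n) (hj₀ : Measurable j₀)
    (hcell : ∀ U : X, ∀ l : Fin n, l ≠ j₀ U →
      dist U (S (j₀ U)) + d (j₀ U) ≤ dist U (S l) + d l)
    (hcap : ∀ m, μ (j₀ ⁻¹' {m}) ≤ ENNReal.ofReal (C m))
    (hslack : ∀ m, μ (j₀ ⁻¹' {m}) < ENNReal.ofReal (C m) → ∀ l, d m ≤ d l) :
    ∀ j : X → Fin n, Measurable j → (∀ m, μ (j ⁻¹' {m}) ≤ ENNReal.ofReal (C m)) →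
      ∫⁻ U, ENNReal.ofReal (dist (S (j₀ U)) U) ∂μ ≤
        ∫⁻ U, ENNReal.ofReal (dist (S (j U)) U) ∂μ := by
  intro j hj hjcap
  rcases isEmpty_or_nonempty X with hX | hX
  · simp [μ.eq_zero_of_isEmpty]
  have hnn : Nonempty (Fin n) := ⟨j₀ hX.some⟩
  by_cases htop : ∫⁻ U, ENNReal.ofReal (dist (S (j U)) U) ∂μ = ⊤
  · simp [htop]
  -- measurability
  have hmS : Measurable S := measurable_of_finite S
  have hmdist : ∀ (k : X → Fin n), Measurable k →
      Measurable fun U => dist (S (k U)) U := by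
    intro k hk
    have hrepr : (fun U => dist (S (k U)) U)
        = fun U => ∑ m, Set.indicator (k ⁻¹' {m}) (fun V => dist (S m) V) U := by
      funext U
      rw [Finset.sum_eq_single (k U)]
      · simp [Set.indicator_of_mem, Set.mem_preimage]
      · intro m _ hm
        exact Set.indicator_of_notMem (by simp [Ne.symm hm]) _
      · simp
    rw [hrepr]
    exact Finset.measurable_sum _ fun m _ =>
      ((continuous_const.dist continuous_id).measurable).indicator
        (hk (measurableSet_singleton m))
  have hmf : Measurable fun U => dist (S (j₀ U)) U := hmdist j₀ hj₀
  have hmg : Measurable fun U => dist (S (j U)) U := hmdist j hj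
  -- g is integrable
  have hgint : Integrable (fun U => dist (S (j U)) U) μ := by
    refine ⟨hmg.aestronglyMeasurable, ?_⟩
    rw [hasFiniteIntegral_iff_ofReal (ae_of_all μ fun U => dist_nonneg)]
    exact lt_top_iff_ne_top.2 htop
  -- a bound on d
  obtain ⟨M, hM⟩ : ∃ M : ℝ, ∀ m, |d m| ≤ M :=
    ⟨Finset.univ.sup' Finset.univ_nonempty fun m => |d m|,
      fun m => Finset.le_sup' (fun m => |d m|) (Finset.mem_univ m)⟩
  -- pointwise inequality
  have hpt : ∀ U, dist (S (j₀ U)) U + d (j₀ U) ≤ dist (S (j U)) U + d (j U) := by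
    intro U
    rcases eq_or_ne (j U) (j₀ U) with h | h
    · rw [h]
    · have := hcell U (j U) h
      rw [dist_comm U (S (j₀ U)), dist_comm U (S (j U))] at this
      exact this
  -- f is integrable
  have hfint : Integrable (fun U => dist (S (j₀ U)) U) μ := by
    refine Integrable.mono' (hgint.add (integrable_const (2 * M)))
      hmf.aestronglyMeasurable (ae_of_all μ fun U => ?_)
    rw [Real.norm_eq_abs, abs_of_nonneg dist_nonneg]
    have h1 := hpt U
    have h2 := (abs_le.1 (hM (j U))).2
    have h3 := (abs_le.1 (hM (j₀ U))).1
    simp only [Pi.add_apply]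
    linarith
  have hdjint : ∀ (k : X → Fin n), Measurable k → Integrable (fun U => d (k U)) μ := by
    intro k hk
    refine Integrable.mono' (integrable_const M)
      ((measurable_of_finite d).comp hk).aestronglyMeasurable
      (ae_of_all μ fun U => ?_)
    exact hM (k U)
  -- integrate the pointwise inequality
  have hmono : ∫ U, (dist (S (j₀ U)) U + d (j₀ U)) ∂μ
      ≤ ∫ U, (dist (S (j U)) U + d (j U)) ∂μ :=
    integral_mono (hfint.add (hdjint j₀ hj₀)) (hgint.add (hdjint j hj)) hpt
  rw [integral_add hfint (hdjint j₀ hj₀), integral_add hgint (hdjint j hj)] at hmono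
  rw [integral_comp_eq μ d j₀ hj₀, integral_comp_eq μ d j hj] at hmono
  -- the combinatorial inequality
  set a : Fin n → ℝ := fun m => (μ (j₀ ⁻¹' {m})).toReal with ha
  set b : Fin n → ℝ := fun m => (μ (j ⁻¹' {m})).toReal with hb
  have hfin : ∀ (k : X → Fin n) (m : Fin n), μ (k ⁻¹' {m}) ≠ ⊤ :=
    fun k m => (measure_lt_top μ _).ne
  have habs : ∑ m, a m = ∑ m, b m := by
    rw [← ENNReal.toReal_sum (fun m _ => hfin j₀ m),
      ← ENNReal.toReal_sum (fun m _ => hfin j m),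
      sum_measure_preimage μ j₀ hj₀, sum_measure_preimage μ j hj]
  have hkey : ∑ m, d m * b m ≤ ∑ m, d m * a m := by
    refine key_sum d a b (fun m => max (C m) 0) habs (fun m => ?_) (fun m hm l => ?_)
    · calc b m ≤ (ENNReal.ofReal (C m)).toReal :=
            ENNReal.toReal_mono ENNReal.ofReal_ne_top (hjcap m)
        _ = max (C m) 0 := ENNReal.toReal_ofReal'
    · refine hslack m ?_ l
      have h0 : (0:ℝ) ≤ a m := ENNReal.toReal_nonneg
      replace hm : a m < max (C m) 0 := hm
      have hCpos : 0 < C m := by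
        by_contra hC
        push_neg at hC
        rw [max_eq_right hC] at hm
        exact absurd hm (not_lt.2 h0)
      rw [max_eq_left hCpos.le] at hm
      have : ENNReal.ofReal (a m) < ENNReal.ofReal (C m) :=
        (ENNReal.ofReal_lt_ofReal_iff hCpos).2 hm
      rwa [ENNReal.ofReal_toReal (hfin j₀ m)] at this
  -- conclude
  have hint : ∫ U, dist (S (j₀ U)) U ∂μ ≤ ∫ U, dist (S (j U)) U ∂μ := by linarith
  rw [← ofReal_integral_eq_lintegral_ofReal hfint (ae_of_all μ fun U => dist_nonneg),
    ← ofReal_integral_eq_lintegral_ofReal hgint (ae_of_all μ fun U => dist_nonneg)]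
  exact ENNReal.ofReal_le_ofReal hint
end
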